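/- arXiv:2404.01719 — 4 statements merged into one kernel-verified Lean document; each statement's English description precedes it below -/
import Mathlib

section
/- In the truncated polynomial ring F[s,t]/(s^{p-1}, t^{p-1}) over a field F of characteristic p > 2, for every degree d ≥ p-1, every homogeneous polynomial of degree d lies in the image of multiplication by the element s + t + st restricted to the span of homogeneous components of degree ≥ d-1. -/
/-!
Write `δ = s + t + st`. From `δ (s^a t^c) = s^(a+1) t^c + s^a t^(c+1) + s^(a+1) t^(c+1)` we get
`s^a t^(c+1) ≡ -s^(a+1) t^c - s^(a+1) t^(c+1)` modulo the image of `δ`, which trades a monomial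
for monomials of no smaller degree with a larger power of `s`. Iterating pushes the exponent of `s`
up to `p - 1`, where the monomial vanishes; a monomial with no `t` left has degree `d ≥ p - 1` in
`s` alone and vanishes too.
-/

open MvPolynomial

/-- The quotient map onto `F[s,t]/(s^{p-1}, t^{p-1})`. -/
noncomputable def mkq (F : Type*) [Field F] (p : ℕ) :
    MvPolynomial (Fin 2) F →+*
      MvPolynomial (Fin 2) F ⧸
        (Ideal.span {(X 0 : MvPolynomial (Fin 2) F) ^ (p - 1), (X 1) ^ (p - 1)}) :=
  Ideal.Quotient.mk _

section

variable (R : Type*) {Q : Type*} [CommRing R] [CommRing Q] [Algebra R Q] (s t : Q)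

def monomialSpanDegreeGE (c : ℕ) : Submodule R Q :=
  Submodule.span R {x | ∃ i j : ℕ, c ≤ i + j ∧ x = s ^ i * t ^ j}

variable {R s t}

lemma pow_mul_pow_mem_monomialSpanDegreeGE {c i j : ℕ} (h : c ≤ i + j) :
    s ^ i * t ^ j ∈ monomialSpanDegreeGE R s t c :=
  Submodule.subset_span ⟨i, j, h, rfl⟩

lemma monomialSpanDegreeGE_antitone : Antitone (monomialSpanDegreeGE R s t) :=
  fun _ _ hcc' => Submodule.span_mono fun _ ⟨i, j, hij, hx⟩ => ⟨i, j, hcc'.trans hij, hx⟩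

theorem pow_mul_pow_mem_map_mulLeft {n : ℕ} (hs : s ^ n = 0) (a b : ℕ) (hab : n ≤ a + b) :
    s ^ a * t ^ b ∈ (monomialSpanDegreeGE R s t (a + b - 1)).map
      (LinearMap.mulLeft R (s + t + s * t)) := by
  by_cases ha : n ≤ a
  · rw [pow_eq_zero_of_le ha hs, zero_mul]
    exact Submodule.zero_mem _
  obtain ⟨c, rfl⟩ : ∃ c, b = c + 1 := ⟨b - 1, by omega⟩
  have hδ : (s + t + s * t) * (s ^ a * t ^ c) ∈ (monomialSpanDegreeGE R s t (a + (c + 1) - 1)).map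
      (LinearMap.mulLeft R (s + t + s * t)) :=
    ⟨_, pow_mul_pow_mem_monomialSpanDegreeGE (by omega), rfl⟩
  have hsame := pow_mul_pow_mem_map_mulLeft hs (a + 1) c (by omega)
  rw [show a + 1 + c = a + (c + 1) by omega] at hsame
  have hhigher := Submodule.map_mono
    (monomialSpanDegreeGE_antitone (show a + (c + 1) - 1 ≤ a + 1 + (c + 1) - 1 by omega))
    (pow_mul_pow_mem_map_mulLeft hs (a + 1) (c + 1) (by omega))
  rw [show s ^ a * t ^ (c + 1) =
    (s + t + s * t) * (s ^ a * t ^ c) - s ^ (a + 1) * t ^ c - s ^ (a + 1) * t ^ (c + 1) by ring]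
  exact Submodule.sub_mem _ (Submodule.sub_mem _ hδ hsame) hhigher
termination_by n - a

end

theorem stmt_0_general (F : Type*) [Field F] (p : ℕ)
    (d : ℕ) (hd : p - 1 ≤ d) :
    Submodule.span F
        {x | ∃ i j : ℕ, i + j = d ∧ x = mkq F p ((X 0) ^ i * (X 1) ^ j)} ≤
      Submodule.map
        (LinearMap.mulLeft F (mkq F p (X 0 + X 1 + X 0 * X 1)))
        (Submodule.span F
          {x | ∃ i j : ℕ, d - 1 ≤ i + j ∧ x = mkq F p ((X 0) ^ i * (X 1) ^ j)}) := by
  have hs : mkq F p (X 0) ^ (p - 1) = 0 := by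
    rw [← map_pow]
    exact Ideal.Quotient.eq_zero_iff_mem.mpr (Ideal.subset_span (by simp))
  rw [Submodule.span_le]
  rintro _ ⟨i, j, rfl, rfl⟩
  simpa only [map_mul, map_pow, map_add, SetLike.mem_coe, monomialSpanDegreeGE] using
    pow_mul_pow_mem_map_mulLeft (R := F) (t := mkq F p (X 1)) hs i j hd

/-- In `F[s,t]/(s^{p-1},t^{p-1})` with `char F = p > 2`, every homogeneous component of
degree `d ≥ p-1` lies in the image, under multiplication by `s + t + st`, of the span of the
homogeneous components of degree `≥ d - 1`. -/
theorem stmt_0 (F : Type*) [Field F] (p : ℕ) (hp : p.Prime) [CharP F p] (h2 : 2 < p)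
    (d : ℕ) (hd : p - 1 ≤ d) :
    Submodule.span F
        {x | ∃ i j : ℕ, i + j = d ∧ x = mkq F p ((X 0) ^ i * (X 1) ^ j)} ≤
      Submodule.map
        (LinearMap.mulLeft F (mkq F p (X 0 + X 1 + X 0 * X 1)))
        (Submodule.span F
          {x | ∃ i j : ℕ, d - 1 ≤ i + j ∧ x = mkq F p ((X 0) ^ i * (X 1) ^ j)}) :=
  stmt_0_general F p d hd
end

section
/- Let V be the (p-1)-dimensional indecomposable F[C_p]-module as above, and λ : V ⊗ V → F a C_p-equivariant linear map. If the associated bilinear form (u,v) ↦ λ(u ⊗ v) is nondegenerate, then λ(v_0 ⊗ v_{p-2}) ≠ 0. -/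
/-!
`σ` fixes `v_{p-2}`, so by invariance `λ((σ - 1)x ⊗ v_{p-2}) = λ(σx ⊗ σv_{p-2}) - λ(x ⊗ v_{p-2}) = 0`:
`v_{p-2}` is right-orthogonal to the image of `σ - 1`, which contains `v_1, …, v_{p-2}`.
If it were also orthogonal to `v_0`, it would lie in the right radical of the form.
-/

open TensorProduct

section InvariantPairing

variable {R M M' N : Type*} [CommRing R] [AddCommGroup M] [Module R M] [AddCommGroup M']
  [Module R M'] [AddCommGroup N] [Module R N]

theorem map_sub_tmul_eq_zero_of_isFixedPt {σ : M → M} {lam : M ⊗[R] M →ₗ[R] N}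
    (hlam : ∀ x y, lam (σ x ⊗ₜ σ y) = lam (x ⊗ₜ y)) {w : M} (hw : Function.IsFixedPt σ w)
    (x : M) : lam ((σ x - x) ⊗ₜ w) = 0 := by
  rw [sub_tmul, map_sub, ← hlam x w, hw, sub_self]

theorem map_tmul_eq_zero_of_basis {ι : Type*} (b : Module.Basis ι R M)
    {lam : M ⊗[R] M' →ₗ[R] N} {w : M'} (h : ∀ i, lam (b i ⊗ₜ w) = 0) (x : M) :
    lam (x ⊗ₜ w) = 0 :=
  LinearMap.congr_fun (b.ext (f₁ := lam ∘ₗ (TensorProduct.mk R M M').flip w) (f₂ := 0) h) x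

end InvariantPairing

section IndicatorVectors

variable {R : Type*} [Semiring R] {n : ℕ}

theorem fin_indicator_eq_single (i : Fin n) :
    (fun j : Fin n => if (j : ℕ) = i then (1 : R) else 0) = Pi.single i 1 := by
  ext j
  simp [Pi.single_apply, Fin.val_inj]

theorem fin_indicator_eq_zero {k : ℕ} (hk : n ≤ k) :
    (fun j : Fin n => if (j : ℕ) = k then (1 : R) else 0) = 0 := by
  ext j
  simp [show (j : ℕ) ≠ k by omega]

end IndicatorVectors

theorem stmt_4_general (F : Type*) [Field F] (p : ℕ) (h2 : 2 < p)
    (v : ℕ → (Fin (p - 1) → F))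
    (hv : ∀ k, v k = fun (j : Fin (p - 1)) => if (j : ℕ) = k then (1 : F) else 0)
    (σ : (Fin (p - 1) → F) ≃ₗ[F] (Fin (p - 1) → F))
    (hσ : ∀ k, σ (v k) = v k + v (k + 1))
    (lam : ((Fin (p - 1) → F) ⊗[F] (Fin (p - 1) → F)) →ₗ[F] F)
    (hlam : ∀ x y, lam (σ x ⊗ₜ[F] σ y) = lam (x ⊗ₜ[F] y))
    (hndr : ∀ y, (∀ x, lam (x ⊗ₜ[F] y) = 0) → y = 0) :
    lam (v 0 ⊗ₜ[F] v (p - 2)) ≠ 0 := by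
  have hbasis (i : Fin (p - 1)) : v i = Pi.basisFun F (Fin (p - 1)) i := by
    rw [hv, fin_indicator_eq_single, Pi.basisFun_apply]
  have hfix : Function.IsFixedPt σ (v (p - 2)) := by
    have hlast : v (p - 1) = 0 := by rw [hv, fin_indicator_eq_zero le_rfl]
    simpa [Function.IsFixedPt, show p - 2 + 1 = p - 1 by omega, hlast] using hσ (p - 2)
  intro h0
  have horth (i : Fin (p - 1)) : lam (Pi.basisFun F _ i ⊗ₜ v (p - 2)) = 0 := by
    rw [← hbasis]
    obtain ⟨_ | k, _⟩ := i
    · exact h0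
    · rw [show v (k + 1) = σ (v k) - v k by rw [hσ]; abel]
      exact map_sub_tmul_eq_zero_of_isFixedPt hlam hfix _
  have hw : v (p - 2) = 0 := hndr _ (map_tmul_eq_zero_of_basis _ horth)
  rw [show p - 2 = (⟨p - 2, by omega⟩ : Fin (p - 1)) from rfl, hbasis] at hw
  exact (Pi.basisFun F _).ne_zero _ hw

/-- Let `V` be the `(p-1)`-dimensional indecomposable `F[C_p]`-module with basis
`v_0,…,v_{p-2}`, `σ(v_i) = v_i + v_{i+1}` (with `v_{p-1} = 0`), and `λ : V ⊗ V → F` a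
`C_p`-equivariant linear map.  If the associated bilinear form is nondegenerate, then
`λ(v_0 ⊗ v_{p-2}) ≠ 0`. -/
theorem stmt_4 (F : Type*) [Field F] (p : ℕ) (hp : p.Prime) [CharP F p] (h2 : 2 < p)
    (v : ℕ → (Fin (p - 1) → F))
    (hv : ∀ k, v k = fun (j : Fin (p - 1)) => if (j : ℕ) = k then (1 : F) else 0)
    (σ : (Fin (p - 1) → F) ≃ₗ[F] (Fin (p - 1) → F))
    (hσ : ∀ k, σ (v k) = v k + v (k + 1)) (hord : σ ^ p = 1)
    (lam : ((Fin (p - 1) → F) ⊗[F] (Fin (p - 1) → F)) →ₗ[F] F)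
    (hlam : ∀ x y, lam (σ x ⊗ₜ[F] σ y) = lam (x ⊗ₜ[F] y))
    (hndl : ∀ x, (∀ y, lam (x ⊗ₜ[F] y) = 0) → x = 0)
    (hndr : ∀ y, (∀ x, lam (x ⊗ₜ[F] y) = 0) → y = 0) :
    lam (v 0 ⊗ₜ[F] v (p - 2)) ≠ 0 :=
  stmt_4_general F p h2 v hv σ hσ lam hlam hndr
end

section
/- Let A be an algebra over F of characteristic p > 2 with automorphism σ of order dividing p and δ = σ - 1. Then for x ∈ ker δ and y ∈ ker δ ∩ im δ^{p-2}, the product xy lies in ker δ ∩ im δ^{p-2}; moreover (ker δ ∩ im δ)(ker δ ∩ im δ^{p-2}) ⊆ im δ^{p-1} and (ker δ)(im δ^{p-1}) ⊆ im δ^{p-1}. -/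
/-!
Write `δ = σ - 1`. Multiplicativity of `σ` gives the twisted Leibniz rule
`δ (a * b) = δ a * σ b + a * δ b`, so multiplication by an element of `ker δ` commutes with every
power of `δ`; this gives the first and third inclusions. For the second, write `x = δ u` and
`y = δ^(p-2) v`. Since `δ² u = 0`, iterating the Leibniz rule gives
`δ^(p-1) (u * v) = u * δ^(p-1) v + (p - 1) • (δ u * σ (δ^(p-2) v)) = (p - 1) • (x * y)`,
and `p - 1 = -1` in characteristic `p`.
-/

open LinearMap

section TwistedDerivation

variable {R A : Type*} [Semiring R] [NonUnitalNonAssocRing A] [Module R A]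
  {f : A →ₗ[R] A}

local notation "δ" => (f - LinearMap.id : Module.End R A)

theorem sub_id_apply_mul (hf : ∀ a b : A, f (a * b) = f a * f b) (a b : A) :
    δ (a * b) = δ a * f b + a * δ b := by
  simp only [LinearMap.sub_apply, id_apply, hf, sub_mul, mul_sub]
  abel

theorem sub_id_pow_apply_mul_of_mem_ker (hf : ∀ a b : A, f (a * b) = f a * f b) {a : A}
    (ha : a ∈ ker δ) (n : ℕ) (b : A) : (δ ^ n) (a * b) = a * (δ ^ n) b := by
  induction n generalizing b with
  | zero => rfl
  | succ n ih =>
    rw [pow_succ, Module.End.mul_apply, Module.End.mul_apply, sub_id_apply_mul hf, mem_ker.1 ha,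
      zero_mul, zero_add, ih]

theorem sub_id_pow_succ_apply_mul_of_sq_eq_zero (hf : ∀ a b : A, f (a * b) = f a * f b) {u : A}
    (hu : δ (δ u) = 0) (n : ℕ) (v : A) :
    (δ ^ (n + 1)) (u * v) = u * (δ ^ (n + 1)) v + (n + 1) • (δ u * f ((δ ^ n) v)) := by
  have hcomm : ∀ m : ℕ, ∀ w, (δ ^ m) (f w) = f ((δ ^ m) w) := fun m =>
    LinearMap.congr_fun (((Commute.refl f).sub_left (Commute.one_left f)).pow_left m).eq
  have hpow : ∀ m : ℕ, ∀ w, (δ ^ m) (δ w) = (δ ^ (m + 1)) w := fun m w => by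
    rw [pow_succ, Module.End.mul_apply]
  induction n generalizing v with
  | zero => simp only [zero_add, pow_one, pow_zero, Module.End.one_apply, one_smul,
      sub_id_apply_mul hf, add_comm]
  | succ n ih =>
    calc (δ ^ (n + 1 + 1)) (u * v) = (δ ^ (n + 1)) (δ u * f v) + (δ ^ (n + 1)) (u * δ v) := by
          rw [pow_succ, Module.End.mul_apply, sub_id_apply_mul hf, map_add]
      _ = δ u * f ((δ ^ (n + 1)) v) + (u * (δ ^ (n + 1 + 1)) v
            + (n + 1) • (δ u * f ((δ ^ (n + 1)) v))) := by
          rw [sub_id_pow_apply_mul_of_mem_ker hf hu, ih, hcomm, hpow, hpow]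
      _ = u * (δ ^ (n + 1 + 1)) v + (n + 1 + 1) • (δ u * f ((δ ^ (n + 1)) v)) := by
          rw [succ_nsmul _ (n + 1)]
          abel

theorem mul_mem_ker_sub_id (hf : ∀ a b : A, f (a * b) = f a * f b) {x y : A}
    (hx : x ∈ ker δ) (hy : y ∈ ker δ) : x * y ∈ ker δ := by
  rw [mem_ker, sub_id_apply_mul hf, mem_ker.1 hx, mem_ker.1 hy, zero_mul, mul_zero, add_zero]

theorem mul_mem_range_sub_id_pow (hf : ∀ a b : A, f (a * b) = f a * f b) {x y : A}
    (hx : x ∈ ker δ) {n : ℕ} (hy : y ∈ range (δ ^ n)) : x * y ∈ range (δ ^ n) := by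
  obtain ⟨v, rfl⟩ := hy
  exact ⟨x * v, sub_id_pow_apply_mul_of_mem_ker hf hx n v⟩

theorem nsmul_mul_mem_range_sub_id_pow_succ (hf : ∀ a b : A, f (a * b) = f a * f b) {x y : A}
    (hx : x ∈ ker δ ⊓ range δ) {n : ℕ} (hy : y ∈ ker δ ⊓ range (δ ^ n)) :
    (n + 1) • (x * y) ∈ range (δ ^ (n + 1)) := by
  obtain ⟨hx, u, rfl⟩ := hx
  obtain ⟨hy, v, rfl⟩ := hy
  have hv : (δ ^ (n + 1)) v = 0 := by rw [pow_succ', Module.End.mul_apply]; exact hy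
  have hfy : f ((δ ^ n) v) = (δ ^ n) v := sub_eq_zero.1 hy
  refine ⟨u * v, ?_⟩
  rw [sub_id_pow_succ_apply_mul_of_sq_eq_zero hf hx, hv, mul_zero, zero_add, hfy]

end TwistedDerivation

theorem stmt_9_general (F A : Type*) [Field F] (p : ℕ) (hp : p.Prime) [CharP F p]
    [NonUnitalNonAssocRing A] [Module F A]
    (σ : A ≃ₗ[F] A) (hmul : ∀ x y : A, σ (x * y) = σ x * σ y) :
    let δ : A →ₗ[F] A := σ.toLinearMap - LinearMap.id
    (∀ x ∈ LinearMap.ker δ, ∀ y ∈ LinearMap.ker δ ⊓ LinearMap.range (δ ^ (p - 2)),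
      x * y ∈ LinearMap.ker δ ⊓ LinearMap.range (δ ^ (p - 2))) ∧
    (∀ x ∈ LinearMap.ker δ ⊓ LinearMap.range δ,
      ∀ y ∈ LinearMap.ker δ ⊓ LinearMap.range (δ ^ (p - 2)),
      x * y ∈ LinearMap.range (δ ^ (p - 1))) ∧
    (∀ x ∈ LinearMap.ker δ, ∀ y ∈ LinearMap.range (δ ^ (p - 1)),
      x * y ∈ LinearMap.range (δ ^ (p - 1))) := by
  intro δ
  have hf : ∀ x y : A, σ.toLinearMap (x * y) = σ.toLinearMap x * σ.toLinearMap y := hmul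
  refine ⟨fun x hx y hy => ⟨mul_mem_ker_sub_id hf hx hy.1, mul_mem_range_sub_id_pow hf hx hy.2⟩,
    fun x hx y hy => ?_, fun x hx y hy => mul_mem_range_sub_id_pow hf hx hy⟩
  have hp1 : p - 2 + 1 = p - 1 := by have := hp.two_le; omega
  have hneg : (p - 1) • (x * y) = -(x * y) := by
    rw [← Nat.cast_smul_eq_nsmul F, Nat.cast_pred hp.pos, CharP.cast_eq_zero, zero_sub,
      neg_one_smul]
  have key := nsmul_mul_mem_range_sub_id_pow_succ hf hx hy
  rwa [hp1, hneg, Submodule.neg_mem_iff] at key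

/-- Let `A` be an algebra over `F` of characteristic `p > 2` with automorphism `σ` of order
dividing `p` and `δ = σ - 1`.  Then `(ker δ)(ker δ ∩ im δ^{p-2}) ⊆ ker δ ∩ im δ^{p-2}`,
`(ker δ ∩ im δ)(ker δ ∩ im δ^{p-2}) ⊆ im δ^{p-1}` and `(ker δ)(im δ^{p-1}) ⊆ im δ^{p-1}`. -/
theorem stmt_9 (F A : Type*) [Field F] (p : ℕ) (hp : p.Prime) [CharP F p] (h2 : 2 < p)
    [NonUnitalNonAssocRing A] [Module F A] [SMulCommClass F A A] [IsScalarTower F A A]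
    (σ : A ≃ₗ[F] A) (hmul : ∀ x y : A, σ (x * y) = σ x * σ y) (hord : σ ^ p = 1) :
    let δ : A →ₗ[F] A := σ.toLinearMap - LinearMap.id
    (∀ x ∈ LinearMap.ker δ, ∀ y ∈ LinearMap.ker δ ⊓ LinearMap.range (δ ^ (p - 2)),
      x * y ∈ LinearMap.ker δ ⊓ LinearMap.range (δ ^ (p - 2))) ∧
    (∀ x ∈ LinearMap.ker δ ⊓ LinearMap.range δ,
      ∀ y ∈ LinearMap.ker δ ⊓ LinearMap.range (δ ^ (p - 2)),
      x * y ∈ LinearMap.range (δ ^ (p - 1))) ∧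
    (∀ x ∈ LinearMap.ker δ, ∀ y ∈ LinearMap.range (δ ^ (p - 1)),
      x * y ∈ LinearMap.range (δ ^ (p - 1))) :=
  stmt_9_general F A p hp σ hmul
end

section
/- Over an algebraically closed field F of characteristic 5, let O be the Cayley (octonion) algebra with standard orthonormal basis e_0 = 1, e_1, ..., e_7 and multiplication e_i e_{i+1} = e_{i+3} (and cyclically, indices mod 7 on {1,...,7}), e_i^2 = -1 for i ≥ 1. Define the para-Hurwitz product x • y = x̄ ȳ, and operators l_x(y) = x • y, r_x(y) = y • x. Then the operator ρ = l_{e_3 - e_4} ∘ r_{e_4 - e_5} ∘ l_{e_5 - e_6} ∘ r_{e_6 - e_7} on O satisfies (ρ - id)^4 = 0 and (ρ - id)^3 ≠ 0, and its Jordan canonical form consists of exactly two Jordan blocks of size 4 for the eigenvalue 1. -/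
/-- The seven lines of the Fano plane encoding the octonion multiplication rule
`e_i e_{i+1} = e_{i+3}` (and cyclically), indices mod 7 on `{1,…,7}`. -/
def octLines : List (Fin 8 × Fin 8 × Fin 8) :=
  [(1, 2, 4), (2, 3, 5), (3, 4, 6), (4, 5, 7), (5, 6, 1), (6, 7, 2), (7, 1, 3)]

/-- The product of basis octonions: `e_i e_j = s • e_k` is encoded as `(s, k)`. -/
def octBasisMul (i j : Fin 8) : ℤ × Fin 8 :=
  if i = 0 then (1, j)
  else if j = 0 then (1, i)
  else if i = j then (-1, 0)
  else
    match octLines.find? (fun x =>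
        (x.1 == i && x.2.1 == j) || (x.2.1 == i && x.2.2 == j) || (x.2.2 == i && x.1 == j)) with
    | some x => (1, if x.1 = i then x.2.2 else if x.2.1 = i then x.1 else x.2.1)
    | none =>
      match octLines.find? (fun x =>
          (x.1 == j && x.2.1 == i) || (x.2.1 == j && x.2.2 == i) || (x.2.2 == j && x.1 == i)) with
      | some x => (-1, if x.1 = j then x.2.2 else if x.2.1 = j then x.1 else x.2.1)
      | none => (0, 0)

/-- The multiplication of the Cayley (octonion) algebra `O = F^8`, in the standard
orthonormal basis `e_0 = 1, e_1, …, e_7`. -/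
def octMulF (F : Type*) [Field F] (x y : Fin 8 → F) : Fin 8 → F :=
  fun k => ∑ i : Fin 8, ∑ j : Fin 8,
    x i * y j * (if (octBasisMul i j).2 = k then ((octBasisMul i j).1 : F) else 0)

/-- The canonical involution (conjugation) of the octonions: it fixes `e_0` and negates
`e_1, …, e_7`. -/
def octConj (F : Type*) [Field F] (x : Fin 8 → F) : Fin 8 → F :=
  fun k => if k = 0 then x 0 else - x k

/-- The para-Hurwitz product `x • y = x̄ ȳ`. -/
def paraMul (F : Type*) [Field F] (x y : Fin 8 → F) : Fin 8 → F :=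
  octMulF F (octConj F x) (octConj F y)

/-- Matrix (w.r.t. the standard basis) of left multiplication `l_x` for the para-Hurwitz
product. -/
noncomputable def lMat (F : Type*) [Field F] (x : Fin 8 → F) : Matrix (Fin 8) (Fin 8) F :=
  fun k j => paraMul F x (Pi.single j 1) k

/-- Matrix (w.r.t. the standard basis) of right multiplication `r_x` for the para-Hurwitz
product. -/
noncomputable def rMat (F : Type*) [Field F] (x : Fin 8 → F) : Matrix (Fin 8) (Fin 8) F :=
  fun k j => paraMul F (Pi.single j 1) x k

/-!
The matrices of `l_x` and `r_x` have integer entries when `x` is an integral combination of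
basis vectors, so `ρ` over `F` is the image of `ρ` over `ZMod 5` under the embedding
`ZMod 5 →+* F`. Over `ZMod 5` everything is a finite computation: `(ρ - 1)^4 = 0`,
`(ρ - 1)^3 ≠ 0`, and `ρ - 1 = X Y` with `X` (8×6) left-invertible and `Y` (6×8)
right-invertible, which pins the rank at 6. All three facts survive the embedding. A nilpotent
of rank 6 on an 8-dimensional space has `8 - 6 = 2` Jordan blocks, and nilpotency index 4 forces
both to have size 4.
-/

section Map

variable {K L : Type*} [Field K] [Field L] (f : K →+* L)

lemma octMulF_map (x y : Fin 8 → K) :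
    octMulF L (f ∘ x) (f ∘ y) = f ∘ octMulF K x y := by
  funext k
  simp only [octMulF, Function.comp_apply, map_sum, map_mul, apply_ite f, map_intCast, map_zero]

lemma octConj_map (x : Fin 8 → K) : octConj L (f ∘ x) = f ∘ octConj K x := by
  funext k
  simp only [octConj, Function.comp_apply, apply_ite f, map_neg]

lemma paraMul_map (x y : Fin 8 → K) :
    paraMul L (f ∘ x) (f ∘ y) = f ∘ paraMul K x y := by
  rw [paraMul, paraMul, octConj_map, octConj_map, octMulF_map]

lemma comp_single_one (j : Fin 8) : f ∘ (Pi.single j 1 : Fin 8 → K) = Pi.single j 1 := by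
  funext i
  simp only [Function.comp_apply, Pi.single_apply, apply_ite f, map_one, map_zero]

lemma lMat_map (x : Fin 8 → K) : (lMat K x).map f = lMat L (f ∘ x) := by
  ext k j
  simp only [Matrix.map_apply, lMat, ← comp_single_one f j, paraMul_map, Function.comp_apply]

lemma rMat_map (x : Fin 8 → K) : (rMat K x).map f = rMat L (f ∘ x) := by
  ext k j
  simp only [Matrix.map_apply, rMat, ← comp_single_one f j, paraMul_map, Function.comp_apply]

lemma comp_single_sub_single (i j : Fin 8) :
    f ∘ (Pi.single i 1 - Pi.single j 1 : Fin 8 → K) = Pi.single i 1 - Pi.single j 1 := by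
  rw [← comp_single_one f i, ← comp_single_one f j]
  funext k
  simp only [Function.comp_apply, Pi.sub_apply, map_sub]

end Map

noncomputable def paraRho (K : Type*) [Field K] : Matrix (Fin 8) (Fin 8) K :=
  lMat K (Pi.single 3 1 - Pi.single 4 1) * rMat K (Pi.single 4 1 - Pi.single 5 1) *
    lMat K (Pi.single 5 1 - Pi.single 6 1) * rMat K (Pi.single 6 1 - Pi.single 7 1)

lemma paraRho_sub_one_map {K L : Type*} [Field K] [Field L] (f : K →+* L) :
    f.mapMatrix (paraRho K - 1) = paraRho L - 1 := by
  simp only [paraRho, map_sub, map_mul, map_one, RingHom.mapMatrix_apply, lMat_map, rMat_map,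
    comp_single_sub_single]

theorem Matrix.rank_eq_card_of_eq_mul {R : Type*} [CommRing R] [StrongRankCondition R]
    {m n r : Type*} [Fintype m] [Fintype n] [Fintype r] [DecidableEq r]
    {A : Matrix m n R} {X : Matrix m r R} {Y : Matrix r n R} {X' : Matrix r m R}
    {Y' : Matrix n r R} (hA : A = X * Y) (hX : X' * X = 1) (hY : Y * Y' = 1) :
    A.rank = Fintype.card r := by
  refine le_antisymm (hA ▸ (rank_mul_le_right X Y).trans Y.rank_le_card_height) ?_
  calc Fintype.card r = (X' * A * Y').rank := by
        rw [hA, Matrix.mul_assoc, Matrix.mul_assoc, ← Matrix.mul_assoc X', hX, Matrix.one_mul, hY,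
          rank_one]
    _ ≤ A.rank := (rank_mul_le_left _ _).trans (rank_mul_le_right _ _)

instance : Fact (Nat.Prime 5) := ⟨Nat.prime_five⟩

lemma paraRho_zmod_sub_one_pow_four : (paraRho (ZMod 5) - 1) ^ 4 = 0 := by
  decide

lemma paraRho_zmod_sub_one_pow_three_ne_zero : (paraRho (ZMod 5) - 1) ^ 3 ≠ 0 := by
  decide

lemma paraRho_zmod_sub_one_rank_factorization :
    ∃ (X : Matrix (Fin 8) (Fin 6) (ZMod 5)) (Y : Matrix (Fin 6) (Fin 8) (ZMod 5))
      (X' : Matrix (Fin 6) (Fin 8) (ZMod 5)) (Y' : Matrix (Fin 8) (Fin 6) (ZMod 5)),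
      paraRho (ZMod 5) - 1 = X * Y ∧ X' * X = 1 ∧ Y * Y' = 1 := by
  -- The first six rows of `ρ - 1` span its row space.
  let top : Fin 6 → Fin 8 := Fin.castLE (by norm_num)
  refine ⟨!![1, 0, 0, 0, 0, 0; 0, 1, 0, 0, 0, 0; 0, 0, 1, 0, 0, 0; 0, 0, 0, 1, 0, 0;
      0, 0, 0, 0, 1, 0; 0, 0, 0, 0, 0, 1; 1, 2, 1, 3, 3, 0; 4, 3, 1, 0, 3, 3],
    (paraRho (ZMod 5) - 1).submatrix top id, (1 : Matrix (Fin 8) (Fin 8) (ZMod 5)).submatrix top id,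
    !![1, 3, 1, 0, 2, 3; 3, 3, 3, 4, 4, 0; 4, 2, 1, 2, 2, 0; 2, 0, 0, 0, 1, 0;
      3, 1, 2, 0, 3, 1; 0, 1, 2, 0, 0, 0; 0, 0, 0, 0, 0, 0; 0, 0, 0, 0, 0, 0], ?_, ?_, ?_⟩ <;>
    decide

lemma rank_paraRho_sub_one (F : Type*) [Field F] [CharP F 5] : (paraRho F - 1).rank = 6 := by
  obtain ⟨X, Y, X', Y', hA, hX, hY⟩ := paraRho_zmod_sub_one_rank_factorization
  set f := ZMod.castHom (dvd_refl 5) F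
  rw [← paraRho_sub_one_map f, ← Fintype.card_fin 6]
  refine Matrix.rank_eq_card_of_eq_mul (X := X.map f) (Y := Y.map f) (X' := X'.map f)
    (Y' := Y'.map f) ?_ ?_ ?_
  · rw [hA, RingHom.mapMatrix_apply, Matrix.map_mul]
  · rw [← Matrix.map_mul, hX, Matrix.map_one f (map_zero f) (map_one f)]
  · rw [← Matrix.map_mul, hY, Matrix.map_one f (map_zero f) (map_one f)]

theorem stmt_11_general (F : Type*) [Field F] [CharP F 5] :
    let e : Fin 8 → (Fin 8 → F) := fun i => Pi.single i 1
    let ρ : Matrix (Fin 8) (Fin 8) F :=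
      lMat F (e 3 - e 4) * rMat F (e 4 - e 5) * lMat F (e 5 - e 6) * rMat F (e 6 - e 7)
    (ρ - 1) ^ 4 = 0 ∧ (ρ - 1) ^ 3 ≠ 0 ∧ (ρ - 1).rank = 6 := by
  intro e ρ
  change (paraRho F - 1) ^ 4 = 0 ∧ (paraRho F - 1) ^ 3 ≠ 0 ∧ (paraRho F - 1).rank = 6
  set f := ZMod.castHom (dvd_refl 5) F
  have hf : Function.Injective (f.mapMatrix : Matrix (Fin 8) (Fin 8) (ZMod 5) →+* _) :=
    Matrix.map_injective f.injective
  refine ⟨?_, ?_, rank_paraRho_sub_one F⟩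
  · rw [← paraRho_sub_one_map f, ← map_pow, paraRho_zmod_sub_one_pow_four, map_zero]
  · rw [← paraRho_sub_one_map f, ← map_pow]
    exact (map_ne_zero_iff _ hf).mpr paraRho_zmod_sub_one_pow_three_ne_zero

/-- Over an algebraically closed field of characteristic `5`, the operator
`ρ = l_{e_3-e_4} ∘ r_{e_4-e_5} ∘ l_{e_5-e_6} ∘ r_{e_6-e_7}` on the octonions satisfies
`(ρ-1)^4 = 0`, `(ρ-1)^3 ≠ 0`, and its Jordan form consists of exactly two Jordan blocks of
size `4` for the eigenvalue `1` (equivalently, `rank (ρ-1) = 6` on the `8`-dimensional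
space). -/
theorem stmt_11 (F : Type*) [Field F] [IsAlgClosed F] [CharP F 5] :
    let e : Fin 8 → (Fin 8 → F) := fun i => Pi.single i 1
    let ρ : Matrix (Fin 8) (Fin 8) F :=
      lMat F (e 3 - e 4) * rMat F (e 4 - e 5) * lMat F (e 5 - e 6) * rMat F (e 6 - e 7)
    (ρ - 1) ^ 4 = 0 ∧ (ρ - 1) ^ 3 ≠ 0 ∧ (ρ - 1).rank = 6 :=
  stmt_11_general F
end
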